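/- arXiv:0809.0812 — 4 statements merged into one kernel-verified Lean document; each statement's English description precedes it below -/
import Mathlib

section
/- Let f : ℝ^n → [0, ∞] be Borel measurable, finite on a set of positive Lebesgue measure, and suppose that for every u ∈ ℝ^n, f(x) ≤ (1/2)(f(x+u) + f(x−u)) holds for Lebesgue-almost every x (the exceptional null set may depend on u). Then there exists a non-empty open convex set U ⊆ ℝ^n such that f is locally essentially bounded on U. -/
/-!
Some sublevel set `A = {f ≤ M}` has positive measure. By Tonelli, `y ↦ μ (A ∩ (y - A))`
integrates to `μ A ^ 2`, so `B = A ∩ (y - A)` has positive measure for some `y`, and by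
continuity of translation (Steinhaus) so has `(g + B) ∩ B` for all small `g`. For `x` near
`y / 2` and `g = 2x - y`, every `u` with `x + u ∈ (g + B) ∩ B` has `x ± u ∈ A`; these `u` form a
set of positive measure, so for a.e. `x` one of them satisfies the midpoint inequality at `x`,
giving `2 f x ≤ 2 M`.
-/

open MeasureTheory Set Filter Topology Pointwise
open scoped ENNReal NNReal

theorem exists_nnreal_measure_setOf_le_ne_zero {α : Type*} [MeasurableSpace α] {μ : Measure α}
    {f : α → ℝ≥0∞} (hfin : 0 < μ {x | f x < ∞}) : ∃ M : ℝ≥0, μ {x | f x ≤ M} ≠ 0 := by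
  by_contra! h
  have hcover : {x | f x < ∞} ⊆ ⋃ m : ℕ, {x | f x ≤ (m : ℝ≥0)} := fun x hx ↦
    mem_iUnion.2 <| (ENNReal.exists_nat_gt hx.ne).imp fun _ hm ↦ by exact_mod_cast hm.le
  exact hfin.ne' <| measure_mono_null hcover <| measure_iUnion_null fun m ↦ h m

theorem exists_measure_setOf_mem_and_sub_mem_ne_zero {G : Type*} [MeasurableSpace G] [AddGroup G]
    [MeasurableAdd₂ G] [MeasurableNeg G] (μ : Measure G) [SFinite μ] [μ.IsAddRightInvariant]
    {A : Set G} (hA : MeasurableSet A) (hA0 : μ A ≠ 0) :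
    ∃ y, μ {v | v ∈ A ∧ y - v ∈ A} ≠ 0 := by
  have hmp := measurePreserving_prod_sub_swap μ μ
  have hprod : μ.prod μ ((fun z : G × G ↦ (z.2, z.1 - z.2)) ⁻¹' A ×ˢ A) = μ A * μ A := by
    rw [hmp.measure_preimage (hA.prod hA).nullMeasurableSet, Measure.prod_prod]
  by_contra! h
  refine mul_ne_zero hA0 hA0 (hprod ▸ Measure.measure_prod_null_of_ae_null
    (hmp.measurable (hA.prod hA)) (Eventually.of_forall fun y ↦ h y))

theorem eventually_nhds_zero_measure_vadd_inter_ne_zero {G : Type*} [AddGroup G]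
    [TopologicalSpace G] [IsTopologicalAddGroup G] [LocallyCompactSpace G] [T2Space G]
    [MeasurableSpace G] [BorelSpace G] (μ : Measure G) [μ.IsAddHaarMeasure] [μ.InnerRegular]
    {B : Set G} (hB : MeasurableSet B) (hB0 : μ B ≠ 0) :
    ∀ᶠ g in 𝓝 (0 : G), μ ((g +ᵥ B) ∩ B) ≠ 0 := by
  obtain ⟨K, hKB, hK, hK0⟩ := hB.exists_lt_isCompact (pos_iff_ne_zero.2 hB0)
  filter_upwards [eventually_nhds_zero_measure_vadd_sdiff_lt hK hK.isClosed hK0.ne' (μ := μ)]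
    with g hg hg0
  -- `μ (g +ᵥ K) = μ K`, so `g +ᵥ K` cannot be almost disjoint from `K`
  have hinter : μ ((g +ᵥ K) ∩ K) = 0 :=
    measure_mono_null (inter_subset_inter (vadd_set_mono hKB) hKB) hg0
  have := measure_le_inter_add_sdiff μ (g +ᵥ K) K
  rw [measure_vadd, hinter, zero_add] at this
  exact (this.trans_lt hg).false

theorem le_of_ae_two_mul_le_add_of_measure_ne_zero {G : Type*} [MeasurableSpace G] [Add G]
    [Sub G] {μ : Measure G} {f : G → ℝ≥0∞} {x : G} {M : ℝ≥0∞}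
    (hx : ∀ᵐ u ∂μ, 2 * f x ≤ f (x + u) + f (x - u))
    (hM : μ {u | f (x + u) ≤ M ∧ f (x - u) ≤ M} ≠ 0) : f x ≤ M := by
  obtain ⟨u, hu, hplus, hminus⟩ := (hx.and_frequently (frequently_ae_iff.2 hM)).exists
  have : 2 * f x ≤ 2 * M := hu.trans (by rw [two_mul]; exact add_le_add hplus hminus)
  exact (ENNReal.mul_le_mul_iff_right two_ne_zero ENNReal.ofNat_ne_top).1 this

theorem ae_ae_two_mul_le_add {G : Type*} [MeasurableSpace G] [AddGroup G] [MeasurableAdd₂ G]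
    [MeasurableSub₂ G] {μ : Measure G} [SFinite μ] {f : G → ℝ≥0∞} (hf : Measurable f)
    (hmid : ∀ u, ∀ᵐ x ∂μ, 2 * f x ≤ f (x + u) + f (x - u)) :
    ∀ᵐ x ∂μ, ∀ᵐ u ∂μ, 2 * f x ≤ f (x + u) + f (x - u) := by
  have hmeas : MeasurableSet {z : G × G | 2 * f z.2 ≤ f (z.2 + z.1) + f (z.2 - z.1)} :=
    measurableSet_le (by fun_prop) (by fun_prop)
  exact (Measure.ae_ae_comm hmeas).1 (ae_of_all _ hmid)

theorem preimage_add_vadd_inter_subset {G : Type*} [AddCommGroup G] (A : Set G) (x y : G) :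
    (x + ·) ⁻¹' (((x + x - y) +ᵥ {v | v ∈ A ∧ y - v ∈ A}) ∩ {v | v ∈ A ∧ y - v ∈ A})
      ⊆ {u | x + u ∈ A ∧ x - u ∈ A} := by
  rintro u ⟨hshift, hu, -⟩
  obtain ⟨-, hminus⟩ := mem_vadd_set_iff_neg_vadd_mem.1 hshift
  refine ⟨hu, ?_⟩
  convert hminus using 1
  simp only [vadd_eq_add]
  abel

theorem exists_isOpen_convex_ae_le_of_ae_two_mul_le_add {X : Type*} [NormedAddCommGroup X]
    [NormedSpace ℝ X] [MeasurableSpace X] [BorelSpace X] [FiniteDimensional ℝ X]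
    (μ : Measure X) [μ.IsAddHaarMeasure] [μ.InnerRegular] {f : X → ℝ≥0∞} (hf : Measurable f)
    (hfin : 0 < μ {x | f x < ∞}) (hmid : ∀ u, ∀ᵐ x ∂μ, 2 * f x ≤ f (x + u) + f (x - u)) :
    ∃ U : Set X, IsOpen U ∧ U.Nonempty ∧ Convex ℝ U ∧ ∃ M < ∞, ∀ᵐ x ∂μ, x ∈ U → f x ≤ M := by
  obtain ⟨M, hM⟩ := exists_nnreal_measure_setOf_le_ne_zero hfin
  set A := {x | f x ≤ M}
  have hA : MeasurableSet A := hf measurableSet_Iic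
  obtain ⟨y, hy⟩ := exists_measure_setOf_mem_and_sub_mem_ne_zero μ hA hM
  have hB : MeasurableSet {v | v ∈ A ∧ y - v ∈ A} := hA.inter (measurable_const_sub y hA)
  have hcenter : Tendsto (fun x : X ↦ x + x - y) (𝓝 ((2⁻¹ : ℝ) • y)) (𝓝 0) := by
    have hc : Continuous fun x : X ↦ x + x - y := by fun_prop
    simpa [← two_smul ℝ, smul_smul] using hc.tendsto ((2⁻¹ : ℝ) • y)
  obtain ⟨r, hr, hball⟩ := Metric.eventually_nhds_iff_ball.1
    (hcenter.eventually (eventually_nhds_zero_measure_vadd_inter_ne_zero μ hB hy))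
  refine ⟨Metric.ball ((2⁻¹ : ℝ) • y) r, Metric.isOpen_ball, Metric.nonempty_ball.2 hr,
    convex_ball _ r, M, ENNReal.coe_lt_top, ?_⟩
  filter_upwards [ae_ae_two_mul_le_add hf hmid] with x hx hxU
  refine le_of_ae_two_mul_le_add_of_measure_ne_zero hx fun h0 ↦ hball x hxU ?_
  rw [← measure_preimage_add μ x]
  exact measure_mono_null (preimage_add_vadd_inter_subset A x y) h0

theorem midpoint_convex_locally_essentially_bounded (n : ℕ)
    (f : EuclideanSpace ℝ (Fin n) → ENNReal) (hf : Measurable f)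
    (hfin : 0 < volume {x | f x < ⊤})
    (hmid : ∀ u : EuclideanSpace ℝ (Fin n),
      ∀ᵐ x ∂(volume : Measure (EuclideanSpace ℝ (Fin n))),
        2 * f x ≤ f (x + u) + f (x - u)) :
    ∃ U : Set (EuclideanSpace ℝ (Fin n)), IsOpen U ∧ U.Nonempty ∧ Convex ℝ U ∧
      ∀ x ∈ U, ∃ V ∈ nhds x, ∃ M : ENNReal, M < ⊤ ∧
        ∀ᵐ y ∂(volume : Measure (EuclideanSpace ℝ (Fin n))), y ∈ V → f y ≤ M := by
  obtain ⟨U, hU, hne, hconv, M, hM, hbound⟩ :=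
    exists_isOpen_convex_ae_le_of_ae_two_mul_le_add volume hf hfin hmid
  exact ⟨U, hU, hne, hconv, fun x hx ↦ ⟨U, hU.mem_nhds hx, M, hM, hbound⟩⟩
end

section
/- If f : ℝ^n → ℝ satisfies the almost-sure midpoint convexity condition: for every u ∈ ℝ^n, f(x) ≤ (1/2)(f(x+u)+f(x−u)) for almost every x, and f is locally integrable, then the distributional second derivative of f is positive semidefinite: for every h ∈ ℝ^n and every nonnegative test function φ ∈ C_c^∞(ℝ^n), ∫ f(x) (D²_{h,h} φ)(x) dx ≥ 0. -/
open MeasureTheory Set Filter Topology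

lemma symm_second_diff_tendsto (g g' : ℝ → ℝ) (a : ℝ)
    (hg : ∀ t, HasDerivAt g (g' t) t) (hg' : HasDerivAt g' a 0) :
    Tendsto (fun t => (g t + g (-t) - 2 * g 0) / t ^ 2) (𝓝[≠] (0:ℝ)) (𝓝 a) := by
  have hneg : Tendsto (fun t : ℝ => -t) (𝓝[≠] (0:ℝ)) (𝓝[≠] (0:ℝ)) := by
    refine tendsto_nhdsWithin_iff.2 ⟨?_, ?_⟩
    · simpa using (continuous_neg.tendsto (0:ℝ)).mono_left nhdsWithin_le_nhds
    · filter_upwards [self_mem_nhdsWithin] with t ht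
      simpa using ht
  have hslope : Tendsto (slope g' 0) (𝓝[≠] (0:ℝ)) (𝓝 a) :=
    hasDerivAt_iff_tendsto_slope.1 hg'
  have hdiv : Tendsto (fun t => (g' t - g' (-t)) / (2 * t)) (𝓝[≠] (0:ℝ)) (𝓝 a) := by
    have h2 : Tendsto (fun t => (slope g' 0 t + slope g' 0 (-t)) / 2)
        (𝓝[≠] (0:ℝ)) (𝓝 ((a + a) / 2)) :=
      (hslope.add (hslope.comp hneg)).div_const 2
    have heq : ((a + a) / 2 : ℝ) = a := by ring
    rw [heq] at h2
    refine h2.congr' ?_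
    filter_upwards [self_mem_nhdsWithin] with t ht
    have ht' : (t : ℝ) ≠ 0 := ht
    simp only [slope_def_field, sub_zero]
    rw [div_add_div _ _ ht' (neg_ne_zero.2 ht')]
    rw [div_div, div_eq_div_iff (by simp [ht', mul_ne_zero]) (by simp [ht'])]
    ring
  have hf' : ∀ t : ℝ, HasDerivAt (fun s => g s + g (-s) - 2 * g 0)
      (g' t - g' (-t)) t := by
    intro t
    have h1 : HasDerivAt (fun s : ℝ => g (-s)) (g' (-t) * (-1)) t :=
      (hg (-t)).comp t (hasDerivAt_neg t)
    have := ((hg t).add h1).sub_const (2 * g 0)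
    refine this.congr_deriv ?_
    ring
  have hG : ∀ t : ℝ, HasDerivAt (fun s : ℝ => s ^ 2) (2 * t) t := by
    intro t
    simpa using hasDerivAt_pow 2 t
  refine HasDerivAt.lhopital_zero_nhdsNE (f' := fun t => g' t - g' (-t))
      (g' := fun t => 2 * t) (Eventually.of_forall hf') (Eventually.of_forall hG) ?_ ?_ ?_ hdiv
  · filter_upwards [self_mem_nhdsWithin] with t ht
    have : (t:ℝ) ≠ 0 := ht
    positivity
  · have hc : ContinuousAt (fun s => g s + g (-s) - 2 * g 0) 0 :=
      (hf' 0).differentiableAt.continuousAt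
    have h1 := hc.tendsto
    have h0 : g 0 + g (-0) - 2 * g 0 = 0 := by rw [neg_zero]; ring
    rw [h0] at h1
    exact h1.mono_left nhdsWithin_le_nhds
  · have h1 : Tendsto (fun t : ℝ => t ^ 2) (𝓝 0) (𝓝 ((0:ℝ) ^ 2)) :=
      (continuous_pow 2).tendsto 0
    rw [show ((0:ℝ) ^ 2) = 0 by norm_num] at h1
    exact h1.mono_left nhdsWithin_le_nhds

theorem distributional_hessian_nonneg_of_ae_midpoint_convex (n : ℕ)
    (f : EuclideanSpace ℝ (Fin n) → ℝ)
    (hloc : LocallyIntegrable f (volume : Measure (EuclideanSpace ℝ (Fin n))))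
    (hmid : ∀ u : EuclideanSpace ℝ (Fin n),
      ∀ᵐ x ∂(volume : Measure (EuclideanSpace ℝ (Fin n))),
        f x ≤ (1 / 2) * (f (x + u) + f (x - u))) :
    ∀ (h : EuclideanSpace ℝ (Fin n)) (φ : EuclideanSpace ℝ (Fin n) → ℝ),
      ContDiff ℝ (⊤ : ℕ∞) φ → HasCompactSupport φ → (∀ x, 0 ≤ φ x) →
      0 ≤ ∫ x, f x * fderiv ℝ (fun y => fderiv ℝ φ y h) x h := by
  intro h φ hφ hsupp hφ0
  set φ₁ : EuclideanSpace ℝ (Fin n) → ℝ := fun y => fderiv ℝ φ y h with hφ₁def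
  -- smoothness of φ₁
  have hφ1 : ContDiff ℝ (⊤ : ℕ∞) φ₁ := by
    exact ((ContinuousLinearMap.apply ℝ ℝ h).contDiff).comp (hφ.fderiv_right (m := (⊤ : ℕ∞)) (by simp))
  have hφ1supp : HasCompactSupport φ₁ := by
    have h1 : HasCompactSupport (fderiv ℝ φ) := hsupp.fderiv ℝ
    exact h1.comp_left (g := fun L : EuclideanSpace ℝ (Fin n) →L[ℝ] ℝ => L h) rfl
  set Φ : EuclideanSpace ℝ (Fin n) → ℝ := fun x => fderiv ℝ φ₁ x h with hΦdef
  have hΦc : Continuous Φ :=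
    (((ContinuousLinearMap.apply ℝ ℝ h).contDiff).comp (hφ1.fderiv_right (m := (⊤ : ℕ∞)) (by simp))).continuous
  have hΦsupp : HasCompactSupport Φ :=
    (hφ1supp.fderiv ℝ).comp_left (g := fun L : EuclideanSpace ℝ (Fin n) →L[ℝ] ℝ => L h) rfl
  obtain ⟨C, hC⟩ : ∃ C, ∀ x, ‖Φ x‖ ≤ C := hΦsupp.exists_bound_of_continuous hΦc
  have hC0 : 0 ≤ C := le_trans (norm_nonneg _) (hC 0)
  -- derivative facts
  have hχ : ∀ (x : EuclideanSpace ℝ (Fin n)) (t : ℝ), HasDerivAt (fun s => φ (x + s • h)) (φ₁ (x + t • h)) t := by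
    intro x t
    have hL : HasDerivAt (fun s : ℝ => x + s • h) h t := by
      simpa using ((hasDerivAt_id t).smul_const h).const_add x
    exact ((hφ.differentiable (by simp) (x + t • h)).hasFDerivAt).comp_hasDerivAt t hL
  have hχ1 : ∀ (x : EuclideanSpace ℝ (Fin n)) (t : ℝ), HasDerivAt (fun s => φ₁ (x + s • h)) (Φ (x + t • h)) t := by
    intro x t
    have hL : HasDerivAt (fun s : ℝ => x + s • h) h t := by
      simpa using ((hasDerivAt_id t).smul_const h).const_add x
    exact ((hφ1.differentiable (by simp) (x + t • h)).hasFDerivAt).comp_hasDerivAt t hL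
  -- pointwise limit
  have limit_pt : ∀ x : EuclideanSpace ℝ (Fin n), Tendsto
      (fun t : ℝ => (φ (x + t • h) + φ (x - t • h) - 2 * φ x) / t ^ 2)
      (𝓝[≠] (0:ℝ)) (𝓝 (Φ x)) := by
    intro x
    have h0 : HasDerivAt (fun s : ℝ => φ₁ (x + s • h)) (Φ x) (0:ℝ) := by
      have := hχ1 x 0
      simpa using this
    have hT := symm_second_diff_tendsto (fun s => φ (x + s • h)) (fun s => φ₁ (x + s • h))
      (Φ x) (hχ x) h0
    refine hT.congr fun t => ?_
    simp [neg_smul, sub_eq_add_neg]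
  -- uniform bound on the second difference
  have qbound : ∀ (t : ℝ) (x : EuclideanSpace ℝ (Fin n)),
      ‖φ (x + t • h) + φ (x - t • h) - 2 * φ x‖ ≤ 2 * C * t ^ 2 := by
    intro t x
    have lip : ∀ a b : ℝ, ‖φ₁ (x + b • h) - φ₁ (x + a • h)‖ ≤ C * ‖b - a‖ := by
      intro a b
      exact Convex.norm_image_sub_le_of_norm_hasDerivWithin_le
        (f := fun s => φ₁ (x + s • h)) (f' := fun s => Φ (x + s • h)) (s := Set.univ)
        (fun s _ => (hχ1 x s).hasDerivWithinAt) (fun s _ => hC _) convex_univ trivial trivial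
    have hG' : ∀ s : ℝ, HasDerivAt (fun r : ℝ => φ (x + r • h) + φ (x + (-r) • h))
        (φ₁ (x + s • h) - φ₁ (x + (-s) • h)) s := by
      intro s
      have h1 : HasDerivAt (fun r : ℝ => φ (x + (-r) • h)) (φ₁ (x + (-s) • h) * (-1)) s :=
        (hχ x (-s)).comp s (hasDerivAt_neg s)
      have h2 := (hχ x s).add h1
      refine h2.congr_deriv ?_
      ring
    have hmvt := Convex.norm_image_sub_le_of_norm_hasDerivWithin_le
      (f := fun r : ℝ => φ (x + r • h) + φ (x + (-r) • h))
      (f' := fun s : ℝ => φ₁ (x + s • h) - φ₁ (x + (-s) • h)) (s := Set.Icc (-|t|) |t|)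
      (fun s _ => (hG' s).hasDerivWithinAt)
      (C := 2 * C * |t|)
      (fun s hs => by
        have h1 := lip (-s) s
        have h2 : ‖s - -s‖ = 2 * |s| := by
          rw [sub_neg_eq_add, Real.norm_eq_abs]
          rw [show s + s = 2 * s by ring, abs_mul]
          simp
        have h3 : |s| ≤ |t| := abs_le.2 ⟨hs.1, hs.2⟩
        calc ‖φ₁ (x + s • h) - φ₁ (x + (-s) • h)‖ ≤ C * (2 * |s|) := by
              rw [← h2]; exact lip (-s) s
          _ ≤ 2 * C * |t| := by nlinarith)
      (convex_Icc _ _)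
      (Set.mem_Icc.2 ⟨by simp [neg_nonpos.2 (abs_nonneg t)], abs_nonneg t⟩)
      (Set.mem_Icc.2 ⟨neg_abs_le t, le_abs_self t⟩)
    have hEq : φ (x + t • h) + φ (x - t • h) - 2 * φ x
        = (fun r : ℝ => φ (x + r • h) + φ (x + (-r) • h)) t
          - (fun r : ℝ => φ (x + r • h) + φ (x + (-r) • h)) 0 := by
      simp [neg_smul, sub_eq_add_neg]
      ring
    rw [hEq]
    calc ‖_ - _‖ ≤ 2 * C * |t| * ‖t - (0:ℝ)‖ := hmvt
      _ = 2 * C * t ^ 2 := by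
          rw [sub_zero, Real.norm_eq_abs]
          rw [mul_assoc, ← abs_mul]
          rw [show t * t = t ^ 2 by ring, abs_of_nonneg (sq_nonneg t)]
  -- compact set containing supports of all shifted functions
  set K : Set (EuclideanSpace ℝ (Fin n)) := Metric.cthickening ‖h‖ (tsupport φ) with hKdef
  have hK : IsCompact K := hsupp.cthickening
  have hKmeas : MeasurableSet K := (Metric.isClosed_cthickening).measurableSet
  have mem_K : ∀ (t : ℝ), |t| ≤ 1 → ∀ x ∉ K,
      φ (x + t • h) = 0 ∧ φ (x - t • h) = 0 ∧ φ x = 0 := by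
    intro t ht x hx
    have h3 : φ x = 0 := by
      apply image_eq_zero_of_notMem_tsupport
      intro hmem
      exact hx (Metric.self_subset_cthickening _ hmem)
    have key : ∀ y : EuclideanSpace ℝ (Fin n), dist x y ≤ ‖h‖ → φ y = 0 := by
      intro y hy
      apply image_eq_zero_of_notMem_tsupport
      intro hmem
      exact hx (Metric.mem_cthickening_of_dist_le x y ‖h‖ _ hmem hy)
    refine ⟨key _ ?_, key _ ?_, h3⟩
    · rw [dist_eq_norm]
      have : x - (x + t • h) = -(t • h) := by abel
      rw [this, norm_neg, norm_smul, Real.norm_eq_abs]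
      calc |t| * ‖h‖ ≤ 1 * ‖h‖ := by
            exact mul_le_mul_of_nonneg_right ht (norm_nonneg h)
        _ = ‖h‖ := one_mul _
    · rw [dist_eq_norm]
      have : x - (x - t • h) = t • h := by abel
      rw [this, norm_smul, Real.norm_eq_abs]
      calc |t| * ‖h‖ ≤ 1 * ‖h‖ :=
            mul_le_mul_of_nonneg_right ht (norm_nonneg h)
        _ = ‖h‖ := one_mul _
  -- nonnegativity for each shift
  have nonneg_int : ∀ u : EuclideanSpace ℝ (Fin n),
      0 ≤ ∫ x, f x * (φ (x + u) + φ (x - u) - 2 * φ x) := by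
    intro u
    have cont_shift : ∀ v : EuclideanSpace ℝ (Fin n), Continuous (fun x => φ (x + v)) :=
      fun v => hφ.continuous.comp (continuous_id.add continuous_const)
    have supp_shift : ∀ v : EuclideanSpace ℝ (Fin n), HasCompactSupport (fun x => φ (x + v)) :=
      fun v => hsupp.comp_homeomorph (Homeomorph.addRight v)
    have I1 : Integrable (fun x => f x * φ (x + u)) volume := by
      have := hloc.integrable_smul_right_of_hasCompactSupport (cont_shift u) (supp_shift u)
      simpa [smul_eq_mul] using this
    have I2 : Integrable (fun x => f x * φ (x - u)) volume := by
      have h1 : Continuous (fun x : EuclideanSpace ℝ (Fin n) => φ (x + (-u))) := cont_shift (-u)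
      have h2 := supp_shift (-u)
      have := hloc.integrable_smul_right_of_hasCompactSupport h1 h2
      simpa [smul_eq_mul, sub_eq_add_neg] using this
    have I3 : Integrable (fun x => f x * φ x) volume := by
      have := hloc.integrable_smul_right_of_hasCompactSupport hφ.continuous hsupp
      simpa [smul_eq_mul] using this
    have I1s : Integrable (fun x => f (x - u) * φ x) volume := by
      have := I1.comp_sub_right u
      simpa [sub_add_cancel] using this
    have I2s : Integrable (fun x => f (x + u) * φ x) volume := by
      have := I2.comp_add_right u
      simpa [add_sub_cancel_right] using this
    have e1 : ∫ x, f (x - u) * φ x = ∫ x, f x * φ (x + u) := by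
      have := integral_sub_right_eq_self (μ := (volume : Measure (EuclideanSpace ℝ (Fin n))))
        (fun x => f x * φ (x + u)) u
      calc ∫ x, f (x - u) * φ x = ∫ x, f (x - u) * φ ((x - u) + u) := by
            congr 1; ext x; rw [sub_add_cancel]
        _ = ∫ x, f x * φ (x + u) := this
    have e2 : ∫ x, f (x + u) * φ x = ∫ x, f x * φ (x - u) := by
      have := integral_add_right_eq_self (μ := (volume : Measure (EuclideanSpace ℝ (Fin n))))
        (fun x => f x * φ (x - u)) u
      calc ∫ x, f (x + u) * φ x = ∫ x, f (x + u) * φ ((x + u) - u) := by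
            congr 1; ext x; rw [add_sub_cancel_right]
        _ = ∫ x, f x * φ (x - u) := this
    have expand : ∫ x, f x * (φ (x + u) + φ (x - u) - 2 * φ x)
        = (∫ x, f x * φ (x + u)) + (∫ x, f x * φ (x - u)) - 2 * ∫ x, f x * φ x := by
      have h4 : (fun x => f x * (φ (x + u) + φ (x - u) - 2 * φ x))
          = fun x => (f x * φ (x + u) + f x * φ (x - u)) - 2 * (f x * φ x) := by
        ext x; ring
      have I12 : Integrable (fun x => f x * φ (x + u) + f x * φ (x - u)) volume := I1.add I2
      have I3' : Integrable (fun x => 2 * (f x * φ x)) volume := I3.const_mul 2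
      rw [h4, integral_sub I12 I3', integral_add I1 I2, integral_const_mul]
    have expand2 : ∫ x, (f (x - u) + f (x + u) - 2 * f x) * φ x
        = (∫ x, f (x - u) * φ x) + (∫ x, f (x + u) * φ x) - 2 * ∫ x, f x * φ x := by
      have h4 : (fun x => (f (x - u) + f (x + u) - 2 * f x) * φ x)
          = fun x => (f (x - u) * φ x + f (x + u) * φ x) - 2 * (f x * φ x) := by
        ext x; ring
      have I12s : Integrable (fun x => f (x - u) * φ x + f (x + u) * φ x) volume := I1s.add I2s
      have I3' : Integrable (fun x => 2 * (f x * φ x)) volume := I3.const_mul 2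
      rw [h4, integral_sub I12s I3', integral_add I1s I2s, integral_const_mul]
    have pos : 0 ≤ ∫ x, (f (x - u) + f (x + u) - 2 * f x) * φ x := by
      apply integral_nonneg_of_ae
      filter_upwards [hmid u] with x hx
      have h1 : 0 ≤ f (x - u) + f (x + u) - 2 * f x := by linarith
      exact mul_nonneg h1 (hφ0 x)
    rw [expand, ← e1, ← e2, ← expand2]
    exact pos
  -- the sequence of difference quotients
  set t : ℕ → ℝ := fun k => ((k : ℝ) + 1)⁻¹ with htdef
  have ht_pos : ∀ k, 0 < t k := fun k => by positivity
  have ht_le1 : ∀ k, |t k| ≤ 1 := by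
    intro k
    rw [abs_of_pos (ht_pos k)]
    rw [htdef]
    simp only []
    rw [inv_le_one_iff₀]
    right
    have : (0:ℝ) ≤ (k:ℝ) := Nat.cast_nonneg k
    linarith
  have ht_to : Tendsto t atTop (𝓝[≠] (0:ℝ)) := by
    refine tendsto_nhdsWithin_iff.2 ⟨?_, ?_⟩
    · have := tendsto_one_div_add_atTop_nhds_zero_nat (𝕜 := ℝ)
      simpa [htdef, one_div] using this
    · exact Eventually.of_forall fun k => (ht_pos k).ne'
  -- dominated convergence
  set F : ℕ → EuclideanSpace ℝ (Fin n) → ℝ := fun k x =>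
    f x * ((φ (x + t k • h) + φ (x - t k • h) - 2 * φ x) / (t k) ^ 2) with hFdef
  have hF_tendsto : Tendsto (fun k => ∫ x, F k x) atTop (𝓝 (∫ x, f x * Φ x)) := by
    apply tendsto_integral_of_dominated_convergence
      (bound := K.indicator (fun y => 2 * C * ‖f y‖))
    · intro k
      apply hloc.aestronglyMeasurable.mul
      apply Continuous.aestronglyMeasurable
      apply Continuous.div_const
      exact ((hφ.continuous.comp (continuous_id.add continuous_const)).add
        (hφ.continuous.comp (continuous_id.sub continuous_const))).sub
        (continuous_const.mul hφ.continuous)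
    · apply IntegrableOn.integrable_indicator _ hKmeas
      exact ((hloc.integrableOn_isCompact hK).norm).const_mul (2 * C)
    · intro k
      apply Eventually.of_forall
      intro x
      by_cases hx : x ∈ K
      · rw [Set.indicator_of_mem hx]
        rw [norm_mul]
        have hq : ‖(φ (x + t k • h) + φ (x - t k • h) - 2 * φ x) / (t k) ^ 2‖ ≤ 2 * C := by
          rw [norm_div]
          have hpos : (0:ℝ) < ‖(t k) ^ 2‖ := by
            rw [Real.norm_eq_abs, abs_of_nonneg (sq_nonneg _)]
            exact pow_pos (ht_pos k) 2
          rw [div_le_iff₀ hpos]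
          calc ‖φ (x + t k • h) + φ (x - t k • h) - 2 * φ x‖ ≤ 2 * C * (t k) ^ 2 :=
                qbound (t k) x
            _ = 2 * C * ‖(t k) ^ 2‖ := by
                rw [Real.norm_eq_abs, abs_of_nonneg (sq_nonneg _)]
        calc ‖f x‖ * ‖_ / _‖ ≤ ‖f x‖ * (2 * C) := by
              exact mul_le_mul_of_nonneg_left hq (norm_nonneg _)
          _ = 2 * C * ‖f x‖ := by ring
      · rw [Set.indicator_of_notMem hx]
        obtain ⟨ha, hb, hc⟩ := mem_K (t k) (ht_le1 k) x hx
        rw [hFdef]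
        simp [ha, hb, hc]
    · apply Eventually.of_forall
      intro x
      have := ((limit_pt x).comp ht_to).const_mul (f x)
      simpa [hFdef, Function.comp, mul_comm] using this
  -- each term is nonnegative
  have hF_nonneg : ∀ k, 0 ≤ ∫ x, F k x := by
    intro k
    have : ∫ x, F k x = (∫ x, f x * (φ (x + t k • h) + φ (x - t k • h) - 2 * φ x)) / (t k) ^ 2 := by
      rw [← integral_div]
      congr 1; ext x
      rw [hFdef]
      ring
    rw [this]
    exact div_nonneg (nonneg_int (t k • h)) (sq_nonneg _)
  exact ge_of_tendsto' hF_tendsto hF_nonneg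
end

section
/- Let a ∈ [0,1], let μ_n be the standard Gaussian measure on ℝ^n written as product of standard Gaussians on ℝ^k × ℝ^{n−k}, and let G : ℝ^n → [0,∞) be bounded such that (x, z) ↦ exp(−(a/2)(|x|² + |z|²)) G(x, z) is log-concave on ℝ^k × ℝ^{n−k}. Then x ↦ exp(−(a/2)|x|²) ∫ G(x,z) dμ(z) is log-concave on ℝ^k, where μ is standard Gaussian on ℝ^{n−k}. -/
open MeasureTheory Set

/-- The standard Gaussian measure on `ℝ^m`. -/
noncomputable def stdGaussian (m : ℕ) : Measure (EuclideanSpace ℝ (Fin m)) :=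
  (volume : Measure (EuclideanSpace ℝ (Fin m))).withDensity
    (fun x => ENNReal.ofReal ((2 * Real.pi) ^ (-(m : ℝ) / 2) * Real.exp (-‖x‖ ^ 2 / 2)))

/-!
Write `γ(dz) = C e^{-|z|²/2} dz`. Then
`e^{-a|x|²/2} ∫ G(x,z) γ(dz) = ∫ C e^{-(1-a)|z|²/2} · e^{-a(|x|²+|z|²)/2} G(x,z) dz`,
and for `a ≤ 1` the integrand is log-concave in `(x, z)` as a product of log-concave functions.
By the Prékopa–Leindler inequality, integrating a log-concave function over some of its variables
leaves a log-concave function.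

Prékopa–Leindler on `ℝ` follows from the one-dimensional Brunn–Minkowski inequality
`|A| + |B| ≤ |A + B|`, applied to the superlevel sets of `f` and `g` at heights proportional to
their suprema and integrated over the height (layer cake formula). It tensorizes over products,
which gives it on `ℝⁿ`.
-/

open scoped ENNReal Pointwise

namespace ENNReal

theorem rpow_mul_rpow_one_sub (c : ℝ≥0∞) {t : ℝ} (ht₀ : 0 ≤ t) (ht₁ : t ≤ 1) :
    c ^ t * c ^ (1 - t) = c := by
  rw [← rpow_add_of_nonneg _ _ ht₀ (sub_nonneg.2 ht₁), add_sub_cancel, rpow_one]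

theorem mul_rpow_mul_mul_rpow_one_sub (a b c d : ℝ≥0∞) {t : ℝ} (ht₀ : 0 ≤ t) (ht₁ : t ≤ 1) :
    (a * b) ^ t * (c * d) ^ (1 - t) = a ^ t * c ^ (1 - t) * (b ^ t * d ^ (1 - t)) := by
  rw [mul_rpow_of_nonneg _ _ ht₀, mul_rpow_of_nonneg _ _ (sub_nonneg.2 ht₁)]
  ring

theorem rpow_mul_rpow_one_sub_le {t : ℝ} (ht₀ : 0 < t) (ht₁ : t < 1) (a b : ℝ≥0∞) :
    a ^ t * b ^ (1 - t) ≤ ENNReal.ofReal t * a + ENNReal.ofReal (1 - t) * b := by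
  have h := young_inequality (a ^ t) (b ^ (1 - t)) (.inv_one_sub_inv ht₀ ht₁)
  rwa [← rpow_mul, ← rpow_mul, mul_inv_cancel₀ ht₀.ne', mul_inv_cancel₀ (sub_pos.2 ht₁).ne',
    rpow_one, rpow_one, ofReal_inv_of_pos ht₀, ofReal_inv_of_pos (sub_pos.2 ht₁), div_eq_mul_inv,
    div_eq_mul_inv, inv_inv, inv_inv, mul_comm a, mul_comm b] at h

theorem iSup_rpow_mul_iSup_rpow_le {I J : ℕ → ℝ≥0∞} (hI : Monotone I) (hJ : Monotone J)
    {t : ℝ} (ht₀ : 0 < t) (ht₁ : t < 1) {a : ℝ≥0∞} (h : ∀ n, I n ^ t * J n ^ (1 - t) ≤ a) :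
    (⨆ n, I n) ^ t * (⨆ n, J n) ^ (1 - t) ≤ a := by
  have hI' := (orderIsoRpow t ht₀).map_iSup I
  have hJ' := (orderIsoRpow (1 - t) (sub_pos.2 ht₁)).map_iSup J
  simp only [orderIsoRpow_apply] at hI' hJ'
  rw [hI', hJ', iSup_mul]
  refine iSup_le fun i => ?_
  rw [mul_iSup]
  refine iSup_le fun j => (h (max i j)).trans' ?_
  gcongr
  exacts [hI (le_max_left i j), hJ (le_max_right i j)]

end ENNReal

section Measure

variable {α : Type*} [MeasurableSpace α]

theorem lintegral_min_ofReal_eq_mul_lintegral_meas_lt (μ : Measure α) {φ : α → ℝ≥0∞}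
    (hφ : Measurable φ) {c : ℝ} (hc : 0 < c) :
    ∫⁻ x, min (φ x) (ENNReal.ofReal c) ∂μ =
      ENNReal.ofReal c * ∫⁻ s in Ioo 0 1, μ {x | ENNReal.ofReal (c * s) < φ x} := by
  set ψ := fun x => min (φ x) (ENNReal.ofReal c)
  have hψ (x : α) : ψ x ≠ ⊤ := ne_top_of_le_ne_top ENNReal.ofReal_ne_top (min_le_right _ _)
  -- the layer cake formula for `ψ / c`, which takes values in `[0, 1]`
  have hlayer := lintegral_eq_lintegral_meas_lt μ (f := fun x => c⁻¹ * (ψ x).toReal)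
    (ae_of_all _ fun x => by positivity)
    (((hφ.min measurable_const).ennreal_toReal).const_mul c⁻¹).aemeasurable
  have hlevel : EqOn (fun s => μ {x | s < c⁻¹ * (ψ x).toReal})
      ((Iio 1).indicator fun s => μ {x | ENNReal.ofReal (c * s) < φ x}) (Ioi 0) := by
    intro s hs
    by_cases hs₁ : s < 1
    · rw [indicator_of_mem (show s ∈ Iio 1 from hs₁)]
      dsimp only
      congr 1 with x
      have hcs : ENNReal.ofReal (c * s) < ENNReal.ofReal c :=
        (ENNReal.ofReal_lt_ofReal_iff hc).2 (mul_lt_of_lt_one_right hc hs₁)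
      simp only [mem_ofPred_eq, ← div_eq_inv_mul, lt_div_iff₀ hc, mul_comm s c,
        ← ENNReal.ofReal_lt_iff_lt_toReal (mul_pos hc hs).le (hψ x), ψ, lt_min_iff, hcs, and_true]
    · rw [indicator_of_notMem (show s ∉ Iio 1 from hs₁)]
      refine measure_mono_null (fun x hx => ?_) measure_empty
      have : (ψ x).toReal ≤ c := ENNReal.toReal_le_of_le_ofReal hc.le (min_le_right _ _)
      have : c⁻¹ * (ψ x).toReal ≤ 1 := by rwa [← div_eq_inv_mul, div_le_one hc]
      exact hs₁ (hx.trans_le this)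
  simp only [ENNReal.ofReal_mul (inv_nonneg.2 hc.le), ENNReal.ofReal_toReal (hψ _)] at hlayer
  rw [lintegral_const_mul' _ _ ENNReal.ofReal_ne_top,
    setLIntegral_congr_fun measurableSet_Ioi hlevel, setLIntegral_indicator measurableSet_Iio,
    Iio_inter_Ioi] at hlayer
  rw [← hlayer, ← mul_assoc, ← ENNReal.ofReal_mul hc.le, mul_inv_cancel₀ hc.ne', ENNReal.ofReal_one,
    one_mul]

theorem lintegral_eq_iSup_lintegral_min_natCast (μ : Measure α) {φ : α → ℝ≥0∞}
    (hφ : Measurable φ) :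
    ∫⁻ x, φ x ∂μ = ⨆ n : ℕ, ∫⁻ x, min (φ x) n ∂μ := by
  rw [← lintegral_iSup (fun n => hφ.min measurable_const)
    fun m n hmn x => min_le_min_left _ (Nat.cast_le.2 hmn)]
  simp only [← inf_iSup_eq, ENNReal.iSup_natCast, inf_top_eq]

theorem mul_integral_eq_toReal_ofReal_mul_lintegral {μ : Measure α} {r : ℝ} (hr : 0 ≤ r)
    {φ : α → ℝ} (hφ₀ : 0 ≤ᵐ[μ] φ) (hφ : AEStronglyMeasurable φ μ) :
    r * ∫ x, φ x ∂μ = (ENNReal.ofReal r * ∫⁻ x, ENNReal.ofReal (φ x) ∂μ).toReal := by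
  rw [ENNReal.toReal_mul, ENNReal.toReal_ofReal hr, integral_eq_lintegral_of_nonneg_ae hφ₀ hφ]

end Measure

theorem smul_superlevel_add_smul_superlevel_subset {E : Type*} [AddCommGroup E] [Module ℝ E]
    {f g h : E → ℝ≥0∞} {t : ℝ} (ht₀ : 0 < t) (ht₁ : t < 1)
    (hfgh : ∀ x y, f x ^ t * g y ^ (1 - t) ≤ h (t • x + (1 - t) • y)) (a b : ℝ≥0∞) :
    t • {x | a < f x} + (1 - t) • {y | b < g y} ⊆ {z | a ^ t * b ^ (1 - t) < h z} := by
  rintro _ ⟨_, ⟨x, hx, rfl⟩, _, ⟨y, hy, rfl⟩, rfl⟩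
  exact (ENNReal.mul_lt_mul (ENNReal.rpow_lt_rpow hx ht₀)
    (ENNReal.rpow_lt_rpow hy (sub_pos.2 ht₁))).trans_le (hfgh x y)

namespace Real

theorem volume_add_volume_le_volume_add_of_isCompact {K L : Set ℝ} (hK : IsCompact K)
    (hL : IsCompact L) (hK₀ : K.Nonempty) (hL₀ : L.Nonempty) :
    volume K + volume L ≤ volume (K + L) := by
  -- The translates `K + min L` and `max K + L` lie in `K + L` and meet only at `max K + min L`.
  set X := sInf L +ᵥ K
  set Y := sSup K +ᵥ L
  have hX : X ⊆ K + L := by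
    rintro _ ⟨a, ha, rfl⟩
    show sInf L + a ∈ K + L
    rw [add_comm (sInf L)]
    exact add_mem_add ha (hL.sInf_mem hL₀)
  have hY : Y ⊆ K + L := by
    rintro _ ⟨b, hb, rfl⟩
    exact add_mem_add (hK.sSup_mem hK₀) hb
  have hXY : X ∩ Y ⊆ {sSup K + sInf L} := by
    rintro _ ⟨⟨a, ha, rfl⟩, ⟨b, hb, hab⟩⟩
    have := le_csSup hK.bddAbove ha
    have := csInf_le hL.bddBelow hb
    simp only [vadd_eq_add] at hab ⊢
    rw [mem_singleton_iff]
    linarith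
  calc volume K + volume L = volume X + volume Y := by rw [measure_vadd, measure_vadd]
    _ = volume (X ∪ Y) := by
      rw [← measure_union_add_inter X (hL.vadd _).measurableSet,
        measure_mono_null hXY (measure_singleton _), add_zero]
    _ ≤ volume (K + L) := measure_mono (union_subset hX hY)

theorem volume_add_volume_le_volume_add {A B : Set ℝ} (hA : MeasurableSet A)
    (hB : MeasurableSet B) (hA₀ : A.Nonempty) (hB₀ : B.Nonempty) :
    volume A + volume B ≤ volume (A + B) := by
  obtain ⟨a, ha⟩ := hA₀
  obtain ⟨b, hb⟩ := hB₀
  rw [hA.measure_eq_iSup_isCompact, hB.measure_eq_iSup_isCompact]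
  simp only [iSup_and']
  refine ENNReal.biSup_add_biSup_le' ⟨∅, empty_subset _, isCompact_empty⟩
    ⟨∅, empty_subset _, isCompact_empty⟩ fun K ⟨hKA, hK⟩ L ⟨hLB, hL⟩ => ?_
  calc volume K + volume L ≤ volume (insert a K) + volume (insert b L) := by
        gcongr <;> exact subset_insert _ _
    _ ≤ volume (insert a K + insert b L) :=
        volume_add_volume_le_volume_add_of_isCompact (hK.insert a) (hL.insert b)
          (insert_nonempty _ _) (insert_nonempty _ _)
    _ ≤ volume (A + B) :=
        measure_mono (add_subset_add (insert_subset ha hKA) (insert_subset hb hLB))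

theorem smul_volume_add_smul_volume_le {A B : Set ℝ} (hA : MeasurableSet A)
    (hB : MeasurableSet B) (hA₀ : A.Nonempty) (hB₀ : B.Nonempty) {t : ℝ} (ht₀ : 0 ≤ t)
    (ht₁ : t ≤ 1) :
    ENNReal.ofReal t * volume A + ENNReal.ofReal (1 - t) * volume B ≤
      volume (t • A + (1 - t) • B) := by
  have hsmul (r : ℝ) (S : Set ℝ) (hr : 0 ≤ r) : volume (r • S) = ENNReal.ofReal r * volume S := by
    simp [Measure.addHaar_smul, abs_of_nonneg hr]
  rw [← hsmul t A ht₀, ← hsmul (1 - t) B (sub_nonneg.2 ht₁)]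
  exact volume_add_volume_le_volume_add (hA.const_smul₀ t) (hB.const_smul₀ _) hA₀.smul_set
    hB₀.smul_set

theorem lintegral_rpow_mul_lintegral_rpow_le_of_iSup_ne_top {t : ℝ} (ht₀ : 0 < t) (ht₁ : t < 1)
    {f g h : ℝ → ℝ≥0∞} (hf : Measurable f) (hg : Measurable g) (hh : Measurable h)
    (hfgh : ∀ x y, f x ^ t * g y ^ (1 - t) ≤ h (t • x + (1 - t) • y))
    (hf_top : ⨆ x, f x ≠ ⊤) (hg_top : ⨆ y, g y ≠ ⊤) :
    (∫⁻ x, f x) ^ t * (∫⁻ y, g y) ^ (1 - t) ≤ ∫⁻ z, h z := by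
  set c := (⨆ x, f x).toReal
  set d := (⨆ y, g y).toReal
  rcases ENNReal.toReal_nonneg.eq_or_lt with hc | hc
  · have hf0 : ∀ x, f x = 0 :=
      ENNReal.iSup_eq_zero.1 (((ENNReal.toReal_eq_zero_iff _).1 hc.symm).resolve_right hf_top)
    simp [hf0, ENNReal.zero_rpow_of_pos ht₀]
  rcases ENNReal.toReal_nonneg.eq_or_lt with hd | hd
  · have hg0 : ∀ y, g y = 0 :=
      ENNReal.iSup_eq_zero.1 (((ENNReal.toReal_eq_zero_iff _).1 hd.symm).resolve_right hg_top)
    simp [hg0, ENNReal.zero_rpow_of_pos (sub_pos.2 ht₁)]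
  set e := c ^ t * d ^ (1 - t)
  have he : 0 < e := by positivity
  -- Measuring heights relative to the suprema `c` and `d` makes all superlevel sets below
  -- nonempty, as Brunn–Minkowski requires.
  have hlevel : ∀ s ∈ Ioo (0 : ℝ) 1,
      ENNReal.ofReal t * volume {x | ENNReal.ofReal (c * s) < f x} +
        ENNReal.ofReal (1 - t) * volume {y | ENNReal.ofReal (d * s) < g y} ≤
      volume {z | ENNReal.ofReal (e * s) < h z} := by
    rintro s ⟨hs₀, hs₁⟩
    have hne {φ : ℝ → ℝ≥0∞} {r : ℝ} (hr : 0 < r) (hφ : ENNReal.ofReal r = ⨆ x, φ x) :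
        {x | ENNReal.ofReal (r * s) < φ x}.Nonempty := by
      have hlt : ENNReal.ofReal (r * s) < ⨆ x, φ x :=
        hφ ▸ (ENNReal.ofReal_lt_ofReal_iff hr).2 (mul_lt_of_lt_one_right hr hs₁)
      exact lt_iSup_iff.1 hlt
    have hes : ENNReal.ofReal (c * s) ^ t * ENNReal.ofReal (d * s) ^ (1 - t) =
        ENNReal.ofReal (e * s) := by
      rw [ENNReal.ofReal_rpow_of_pos (by positivity), ENNReal.ofReal_rpow_of_pos (by positivity),
        ← ENNReal.ofReal_mul (by positivity), Real.mul_rpow hc.le hs₀.le,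
        Real.mul_rpow hd.le hs₀.le]
      congr 1
      rw [mul_mul_mul_comm, ← Real.rpow_add hs₀, add_sub_cancel, Real.rpow_one]
    calc _ ≤ volume (t • {x | ENNReal.ofReal (c * s) < f x} +
          (1 - t) • {y | ENNReal.ofReal (d * s) < g y}) :=
          smul_volume_add_smul_volume_le (hf measurableSet_Ioi) (hg measurableSet_Ioi)
            (hne hc (ENNReal.ofReal_toReal hf_top)) (hne hd (ENNReal.ofReal_toReal hg_top))
            ht₀.le ht₁.le
      _ ≤ _ := measure_mono (hes ▸ smul_superlevel_add_smul_superlevel_subset ht₀ ht₁ hfgh _ _)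
  set Lf := ∫⁻ s in Ioo 0 1, volume {x | ENNReal.ofReal (c * s) < f x}
  set Lg := ∫⁻ s in Ioo 0 1, volume {y | ENNReal.ofReal (d * s) < g y}
  have hf_eq : ∫⁻ x, f x = ENNReal.ofReal c * Lf := by
    rw [← lintegral_min_ofReal_eq_mul_lintegral_meas_lt volume hf hc, ENNReal.ofReal_toReal hf_top]
    simp_rw [min_eq_left (le_iSup f _)]
  have hg_eq : ∫⁻ y, g y = ENNReal.ofReal d * Lg := by
    rw [← lintegral_min_ofReal_eq_mul_lintegral_meas_lt volume hg hd, ENNReal.ofReal_toReal hg_top]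
    simp_rw [min_eq_left (le_iSup g _)]
  have hh_le : ENNReal.ofReal e * ∫⁻ s in Ioo 0 1, volume {z | ENNReal.ofReal (e * s) < h z} ≤
      ∫⁻ z, h z := by
    rw [← lintegral_min_ofReal_eq_mul_lintegral_meas_lt volume hh he]
    exact lintegral_mono fun z => min_le_left _ _
  have hsum : ENNReal.ofReal t * Lf + ENNReal.ofReal (1 - t) * Lg ≤
      ∫⁻ s in Ioo 0 1, (ENNReal.ofReal t * volume {x | ENNReal.ofReal (c * s) < f x} +
        ENNReal.ofReal (1 - t) * volume {y | ENNReal.ofReal (d * s) < g y}) := by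
    rw [← lintegral_const_mul' _ _ ENNReal.ofReal_ne_top,
      ← lintegral_const_mul' _ _ ENNReal.ofReal_ne_top]
    exact le_lintegral_add _ _
  calc (∫⁻ x, f x) ^ t * (∫⁻ y, g y) ^ (1 - t) = ENNReal.ofReal e * (Lf ^ t * Lg ^ (1 - t)) := by
        rw [hf_eq, hg_eq, ENNReal.mul_rpow_mul_mul_rpow_one_sub _ _ _ _ ht₀.le ht₁.le,
          ENNReal.ofReal_rpow_of_pos hc, ENNReal.ofReal_rpow_of_pos hd,
          ← ENNReal.ofReal_mul (by positivity)]
    _ ≤ ENNReal.ofReal e * (ENNReal.ofReal t * Lf + ENNReal.ofReal (1 - t) * Lg) :=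
        mul_le_mul_right (ENNReal.rpow_mul_rpow_one_sub_le ht₀ ht₁ _ _) _
    _ ≤ ENNReal.ofReal e * ∫⁻ s in Ioo 0 1, volume {z | ENNReal.ofReal (e * s) < h z} :=
        mul_le_mul_right (hsum.trans (setLIntegral_mono' measurableSet_Ioo hlevel)) _
    _ ≤ ∫⁻ z, h z := hh_le

end Real

section PrekopaLeindler

variable {E F : Type*} [AddCommGroup E] [Module ℝ E] [MeasurableSpace E]
  [AddCommGroup F] [Module ℝ F] [MeasurableSpace F]

def PrekopaLeindler (μ : Measure E) : Prop :=
  ∀ ⦃t : ℝ⦄, 0 ≤ t → t ≤ 1 → ∀ ⦃f g h : E → ℝ≥0∞⦄, Measurable f → Measurable g → Measurable h →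
    (∀ x y, f x ^ t * g y ^ (1 - t) ≤ h (t • x + (1 - t) • y)) →
    (∫⁻ x, f x ∂μ) ^ t * (∫⁻ y, g y ∂μ) ^ (1 - t) ≤ ∫⁻ z, h z ∂μ

def IsLogConcave (f : E → ℝ≥0∞) : Prop :=
  ∀ x y (t : ℝ), 0 ≤ t → t ≤ 1 → f x ^ t * f y ^ (1 - t) ≤ f (t • x + (1 - t) • y)

theorem Real.prekopaLeindler_volume : PrekopaLeindler (volume : Measure ℝ) := by
  intro t ht₀ ht₁ f g h hf hg hh hfgh
  rcases ht₀.eq_or_lt with rfl | ht₀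
  · simpa using lintegral_mono fun y => by simpa using hfgh y y
  rcases ht₁.eq_or_lt with rfl | ht₁
  · simpa using lintegral_mono fun x => by simpa using hfgh x x
  have hmono {φ : ℝ → ℝ≥0∞} : Monotone fun n : ℕ => ∫⁻ x, min (φ x) n :=
    fun m n hmn => lintegral_mono fun x => min_le_min_left _ (Nat.cast_le.2 hmn)
  rw [lintegral_eq_iSup_lintegral_min_natCast volume hf,
    lintegral_eq_iSup_lintegral_min_natCast volume hg]
  refine ENNReal.iSup_rpow_mul_iSup_rpow_le hmono hmono ht₀ ht₁ fun n => ?_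
  refine Real.lintegral_rpow_mul_lintegral_rpow_le_of_iSup_ne_top ht₀ ht₁
    (hf.min measurable_const) (hg.min measurable_const) hh (fun x y => ?_)
    (ne_top_of_le_ne_top (ENNReal.natCast_ne_top n) (iSup_le fun _ => min_le_right _ _))
    (ne_top_of_le_ne_top (ENNReal.natCast_ne_top n) (iSup_le fun _ => min_le_right _ _))
  calc min (f x) n ^ t * min (g y) n ^ (1 - t) ≤ f x ^ t * g y ^ (1 - t) := by
        gcongr <;> exact min_le_left _ _
    _ ≤ h (t • x + (1 - t) • y) := hfgh x y

theorem prekopaLeindler_of_unique [Unique E] (μ : Measure E) : PrekopaLeindler μ := by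
  intro t ht₀ ht₁ f g h _ _ _ hfgh
  have hd := hfgh default default
  rw [Subsingleton.elim (t • default + (1 - t) • default : E) default] at hd
  simp only [lintegral_unique]
  rw [ENNReal.mul_rpow_mul_mul_rpow_one_sub _ _ _ _ ht₀ ht₁,
    ENNReal.rpow_mul_rpow_one_sub _ ht₀ ht₁]
  exact mul_le_mul_left hd _

theorem PrekopaLeindler.of_measurePreserving {μ : Measure E} {ν : Measure F}
    (hμ : PrekopaLeindler μ) (e : E →ₗ[ℝ] F) (he : MeasurePreserving e μ ν) :
    PrekopaLeindler ν := by
  intro t ht₀ ht₁ f g h hf hg hh hfgh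
  rw [← he.lintegral_comp hf, ← he.lintegral_comp hg, ← he.lintegral_comp hh]
  exact hμ ht₀ ht₁ (hf.comp he.measurable) (hg.comp he.measurable) (hh.comp he.measurable)
    fun x y => by simpa using hfgh (e x) (e y)

theorem PrekopaLeindler.fiberwise {ν : Measure F} (hν : PrekopaLeindler ν) {t : ℝ} (ht₀ : 0 ≤ t)
    (ht₁ : t ≤ 1) {f g h : E × F → ℝ≥0∞} (hf : Measurable f) (hg : Measurable g)
    (hh : Measurable h) (hfgh : ∀ p q, f p ^ t * g q ^ (1 - t) ≤ h (t • p + (1 - t) • q))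
    (x y : E) :
    (∫⁻ z, f (x, z) ∂ν) ^ t * (∫⁻ z, g (y, z) ∂ν) ^ (1 - t) ≤
      ∫⁻ z, h (t • x + (1 - t) • y, z) ∂ν :=
  hν ht₀ ht₁ (hf.comp measurable_prodMk_left) (hg.comp measurable_prodMk_left)
    (hh.comp measurable_prodMk_left) fun z w => hfgh (x, z) (y, w)

theorem PrekopaLeindler.prod {μ : Measure E} {ν : Measure F} [SFinite ν]
    (hμ : PrekopaLeindler μ) (hν : PrekopaLeindler ν) : PrekopaLeindler (μ.prod ν) := by
  intro t ht₀ ht₁ f g h hf hg hh hfgh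
  rw [lintegral_prod _ hf.aemeasurable, lintegral_prod _ hg.aemeasurable,
    lintegral_prod _ hh.aemeasurable]
  exact hμ ht₀ ht₁ hf.lintegral_prod_right' hg.lintegral_prod_right' hh.lintegral_prod_right'
    (hν.fiberwise ht₀ ht₁ hf hg hh hfgh)

theorem PrekopaLeindler.isLogConcave_lintegral {ν : Measure F} (hν : PrekopaLeindler ν)
    {f : E × F → ℝ≥0∞} (hf : Measurable f) (hlc : IsLogConcave f) :
    IsLogConcave fun x => ∫⁻ z, f (x, z) ∂ν :=
  fun x y _ ht₀ ht₁ => hν.fiberwise ht₀ ht₁ hf hf hf (hlc · · _ ht₀ ht₁) x y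

end PrekopaLeindler

theorem prekopaLeindler_volume_pi : ∀ n : ℕ, PrekopaLeindler (volume : Measure (Fin n → ℝ))
  | 0 => prekopaLeindler_of_unique _
  | n + 1 => by
    refine (Real.prekopaLeindler_volume.prod (prekopaLeindler_volume_pi n)).of_measurePreserving
      (Fin.consLinearEquiv ℝ fun _ : Fin (n + 1) => ℝ).toLinearMap ?_
    have hcons : ⇑(Fin.consLinearEquiv ℝ fun _ : Fin (n + 1) => ℝ).toLinearMap =
        (MeasurableEquiv.piFinSuccAbove (fun _ : Fin (n + 1) => ℝ) 0).symm := by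
      ext p
      simp
    exact hcons ▸ (volume_preserving_piFinSuccAbove (fun _ : Fin (n + 1) => ℝ) 0).symm

theorem prekopaLeindler_volume_euclideanSpace (n : ℕ) :
    PrekopaLeindler (volume : Measure (EuclideanSpace ℝ (Fin n))) :=
  (prekopaLeindler_volume_pi n).of_measurePreserving
    (WithLp.linearEquiv 2 ℝ (Fin n → ℝ)).symm.toLinearMap (PiLp.volume_preserving_toLp (Fin n))

section LogConcave

variable {E : Type*} [AddCommGroup E] [Module ℝ E]

theorem isLogConcave_const (c : ℝ≥0∞) : IsLogConcave fun _ : E => c :=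
  fun _ _ _ ht₀ ht₁ => (ENNReal.rpow_mul_rpow_one_sub c ht₀ ht₁).le

theorem IsLogConcave.mul {f g : E → ℝ≥0∞} (hf : IsLogConcave f) (hg : IsLogConcave g) :
    IsLogConcave (f * g) := fun x y t ht₀ ht₁ => by
  simp only [Pi.mul_apply]
  rw [ENNReal.mul_rpow_mul_mul_rpow_one_sub _ _ _ _ ht₀ ht₁]
  exact mul_le_mul' (hf x y t ht₀ ht₁) (hg x y t ht₀ ht₁)

theorem isLogConcave_ofReal {f : E → ℝ} (hf₀ : ∀ x, 0 ≤ f x)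
    (hf : ∀ x y (t : ℝ), 0 ≤ t → t ≤ 1 → f x ^ t * f y ^ (1 - t) ≤ f (t • x + (1 - t) • y)) :
    IsLogConcave fun x => ENNReal.ofReal (f x) := fun x y t ht₀ ht₁ => by
  rw [ENNReal.ofReal_rpow_of_nonneg (hf₀ x) ht₀,
    ENNReal.ofReal_rpow_of_nonneg (hf₀ y) (sub_nonneg.2 ht₁),
    ← ENNReal.ofReal_mul (Real.rpow_nonneg (hf₀ x) _)]
  exact ENNReal.ofReal_le_ofReal (hf x y t ht₀ ht₁)

theorem isLogConcave_ofReal_exp {φ : E → ℝ} (hφ : ConcaveOn ℝ univ φ) :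
    IsLogConcave fun x => ENNReal.ofReal (Real.exp (φ x)) :=
  isLogConcave_ofReal (fun _ => (Real.exp_pos _).le) fun x y t ht₀ ht₁ => by
    rw [← Real.exp_mul, ← Real.exp_mul, ← Real.exp_add, Real.exp_le_exp, mul_comm, mul_comm (φ y)]
    exact hφ.2 (mem_univ x) (mem_univ y) ht₀ (sub_nonneg.2 ht₁) (add_sub_cancel t 1)

theorem isLogConcave_ofReal_exp_neg_mul_norm_sq_snd {F : Type*} [NormedAddCommGroup F]
    [NormedSpace ℝ F] {b : ℝ} (hb : 0 ≤ b) :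
    IsLogConcave fun p : E × F => ENNReal.ofReal (Real.exp (-(b * ‖p.2‖ ^ 2))) :=
  isLogConcave_ofReal_exp <|
    (((convexOn_univ_norm.pow (fun _ _ => norm_nonneg _) 2).smul hb).comp_linearMap
      (LinearMap.snd ℝ E F)).neg

end LogConcave

instance (m : ℕ) : IsFiniteMeasure (stdGaussian m) := by
  refine isFiniteMeasure_withDensity_ofReal ?_
  have h := ((GaussianFourier.integrable_cexp_neg_mul_sq_norm_add
    (V := EuclideanSpace ℝ (Fin m)) (b := 1 / 2) (by norm_num) 0 0).norm).const_mul
      ((2 * Real.pi) ^ (-(m : ℝ) / 2))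
  refine h.hasFiniteIntegral.congr (ae_of_all _ fun z => ?_)
  simp [Complex.norm_exp, ← Complex.ofReal_pow, div_eq_inv_mul]

theorem ofReal_exp_mul_lintegral_stdGaussian (m : ℕ) (a s : ℝ) {g : EuclideanSpace ℝ (Fin m) → ℝ}
    (hg : Measurable g) :
    ENNReal.ofReal (Real.exp (-(a / 2) * s)) * ∫⁻ z, ENNReal.ofReal (g z) ∂stdGaussian m =
      ∫⁻ z, ENNReal.ofReal ((2 * Real.pi) ^ (-(m : ℝ) / 2)) *
        ENNReal.ofReal (Real.exp (-((1 - a) / 2 * ‖z‖ ^ 2))) *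
        ENNReal.ofReal (Real.exp (-(a / 2) * (s + ‖z‖ ^ 2)) * g z) := by
  rw [stdGaussian, lintegral_withDensity_eq_lintegral_mul _ (by fun_prop) hg.ennreal_ofReal,
    ← lintegral_const_mul _ (by fun_prop)]
  congr 1 with z
  simp only [Pi.mul_apply]
  rw [← ENNReal.ofReal_mul (by positivity), ← ENNReal.ofReal_mul (by positivity),
    ← ENNReal.ofReal_mul (by positivity), ← ENNReal.ofReal_mul (by positivity)]
  congr 1
  have : Real.exp (-(a / 2) * s) * Real.exp (-‖z‖ ^ 2 / 2) =
      Real.exp (-((1 - a) / 2 * ‖z‖ ^ 2)) * Real.exp (-(a / 2) * (s + ‖z‖ ^ 2)) := by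
    rw [← Real.exp_add, ← Real.exp_add]
    ring_nf
  linear_combination ((2 * Real.pi) ^ (-(m : ℝ) / 2) * g z) * this

theorem a_log_concavity_preserved_by_partial_gaussian_integration_general (k m : ℕ) (a : ℝ)
    (ha1 : a ≤ 1)
    (G : EuclideanSpace ℝ (Fin k) × EuclideanSpace ℝ (Fin m) → ℝ)
    (hGmeas : Measurable G) (hGnonneg : ∀ p, 0 ≤ G p)
    (hGbdd : ∃ M : ℝ, ∀ p, G p ≤ M)
    (hGlogconc : ∀ (p q : EuclideanSpace ℝ (Fin k) × EuclideanSpace ℝ (Fin m)) (α : ℝ),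
      0 ≤ α → α ≤ 1 →
      Real.exp (-(a / 2) * (‖(α • p + (1 - α) • q).1‖ ^ 2 + ‖(α • p + (1 - α) • q).2‖ ^ 2)) *
          G (α • p + (1 - α) • q) ≥
        (Real.exp (-(a / 2) * (‖p.1‖ ^ 2 + ‖p.2‖ ^ 2)) * G p) ^ α *
        (Real.exp (-(a / 2) * (‖q.1‖ ^ 2 + ‖q.2‖ ^ 2)) * G q) ^ (1 - α)) :
    ∀ (x y : EuclideanSpace ℝ (Fin k)) (α : ℝ), 0 ≤ α → α ≤ 1 →
      Real.exp (-(a / 2) * ‖α • x + (1 - α) • y‖ ^ 2) *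
          (∫ z, G (α • x + (1 - α) • y, z) ∂stdGaussian m) ≥
        (Real.exp (-(a / 2) * ‖x‖ ^ 2) * ∫ z, G (x, z) ∂stdGaussian m) ^ α *
        (Real.exp (-(a / 2) * ‖y‖ ^ 2) * ∫ z, G (y, z) ∂stdGaussian m) ^ (1 - α) := by
  intro x y α hα₀ hα₁
  obtain ⟨M, hM⟩ := hGbdd
  have hG (w : EuclideanSpace ℝ (Fin k)) : Measurable fun z => G (w, z) :=
    hGmeas.comp measurable_prodMk_left
  have hlc := ((isLogConcave_const (ENNReal.ofReal ((2 * Real.pi) ^ (-(m : ℝ) / 2)))).mul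
    (isLogConcave_ofReal_exp_neg_mul_norm_sq_snd (by linarith : 0 ≤ (1 - a) / 2))).mul
    (isLogConcave_ofReal (fun p => mul_nonneg (Real.exp_pos _).le (hGnonneg p)) hGlogconc)
  have key := (prekopaLeindler_volume_euclideanSpace m).isLogConcave_lintegral (by fun_prop) hlc
    x y α hα₀ hα₁
  simp only [Pi.mul_apply, ← ofReal_exp_mul_lintegral_stdGaussian m a _ (hG _)] at key
  have hfin (w : EuclideanSpace ℝ (Fin k)) :
      ENNReal.ofReal (Real.exp (-(a / 2) * ‖w‖ ^ 2)) *
        ∫⁻ z, ENNReal.ofReal (G (w, z)) ∂stdGaussian m ≠ ⊤ := by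
    refine ENNReal.mul_ne_top ENNReal.ofReal_ne_top (ne_top_of_le_ne_top ?_
      (lintegral_mono fun z => ENNReal.ofReal_le_ofReal (hM (w, z))))
    rw [lintegral_const]
    exact ENNReal.mul_ne_top ENNReal.ofReal_ne_top (measure_ne_top _ _)
  simp only [ge_iff_le, mul_integral_eq_toReal_ofReal_mul_lintegral (Real.exp_pos _).le
    (ae_of_all _ fun z => hGnonneg _) (hG _).aestronglyMeasurable]
  rw [ENNReal.toReal_rpow, ENNReal.toReal_rpow, ← ENNReal.toReal_mul]
  exact ENNReal.toReal_mono (hfin _) key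

theorem a_log_concavity_preserved_by_partial_gaussian_integration (k m : ℕ) (a : ℝ)
    (ha0 : 0 ≤ a) (ha1 : a ≤ 1)
    (G : EuclideanSpace ℝ (Fin k) × EuclideanSpace ℝ (Fin m) → ℝ)
    (hGmeas : Measurable G) (hGnonneg : ∀ p, 0 ≤ G p)
    (hGbdd : ∃ M : ℝ, ∀ p, G p ≤ M)
    (hGlogconc : ∀ (p q : EuclideanSpace ℝ (Fin k) × EuclideanSpace ℝ (Fin m)) (α : ℝ),
      0 ≤ α → α ≤ 1 →
      Real.exp (-(a / 2) * (‖(α • p + (1 - α) • q).1‖ ^ 2 + ‖(α • p + (1 - α) • q).2‖ ^ 2)) *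
          G (α • p + (1 - α) • q) ≥
        (Real.exp (-(a / 2) * (‖p.1‖ ^ 2 + ‖p.2‖ ^ 2)) * G p) ^ α *
        (Real.exp (-(a / 2) * (‖q.1‖ ^ 2 + ‖q.2‖ ^ 2)) * G q) ^ (1 - α)) :
    ∀ (x y : EuclideanSpace ℝ (Fin k)) (α : ℝ), 0 ≤ α → α ≤ 1 →
      Real.exp (-(a / 2) * ‖α • x + (1 - α) • y‖ ^ 2) *
          (∫ z, G (α • x + (1 - α) • y, z) ∂stdGaussian m) ≥
        (Real.exp (-(a / 2) * ‖x‖ ^ 2) * ∫ z, G (x, z) ∂stdGaussian m) ^ α *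
        (Real.exp (-(a / 2) * ‖y‖ ^ 2) * ∫ z, G (y, z) ∂stdGaussian m) ^ (1 - α) :=
  a_log_concavity_preserved_by_partial_gaussian_integration_general k m a ha1 G hGmeas hGnonneg
    hGbdd hGlogconc
end

section
/- Let P be a probability measure and f a bounded nonnegative measurable function. Then E_P[f (log f − log E_P[f])] = inf_{x>0} E_P[f log(f/x) − (f − x)]. -/
/-!
Writing `m = E_P[f]` and using `f log (f/x) = f log f - f log x` (also true where `f = 0`),
the expectation inside the infimum is `(E_P[f log f] - m) + (x - m log x)`. By `log t ≤ t - 1`,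
the function `x ↦ x - m log x` has infimum `m - m log m` over `x > 0`, which turns the right-hand
side into `E_P[f log f] - m log m`, the left-hand side. Boundedness of `f` makes `f` and `f log f`
integrable.
-/

open MeasureTheory Set

namespace Real

theorem mul_log_div (a : ℝ) {x : ℝ} (hx : x ≠ 0) : a * log (a / x) = a * (log a - log x) := by
  rcases eq_or_ne a 0 with rfl | ha
  · simp
  · rw [log_div ha hx]

theorem sub_mul_log_self_le {m x : ℝ} (hm : 0 ≤ m) (hx : 0 < x) :
    m - m * log m ≤ x - m * log x := by
  rcases hm.eq_or_lt with rfl | hm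
  · simpa using hx.le
  · have h := mul_le_mul_of_nonneg_left (log_le_sub_one_of_pos (div_pos hx hm)) hm.le
    rw [log_div hx.ne' hm.ne', mul_sub, mul_sub, mul_div_cancel₀ _ hm.ne'] at h
    linarith

theorem bddBelow_range_sub_mul_log {m : ℝ} (hm : 0 ≤ m) :
    BddBelow (range fun x : Ioi (0 : ℝ) => (x : ℝ) - m * log x) :=
  ⟨m - m * log m, by rintro _ ⟨x, rfl⟩; exact sub_mul_log_self_le hm x.2⟩

/- The infimum is attained at `x = m` only when `m > 0`; for `m = 0` it is `⨅ x > 0, x = 0`. -/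
theorem iInf_Ioi_sub_mul_log {m : ℝ} (hm : 0 ≤ m) :
    ⨅ x : Ioi (0 : ℝ), ((x : ℝ) - m * log x) = m - m * log m := by
  refine le_antisymm ?_ (le_ciInf fun x => sub_mul_log_self_le hm x.2)
  rcases hm.eq_or_lt with rfl | hm
  · refine le_of_forall_pos_le_add fun ε hε => ?_
    simpa using ciInf_le (bddBelow_range_sub_mul_log le_rfl) ⟨ε, hε⟩
  · exact ciInf_le (bddBelow_range_sub_mul_log hm.le) ⟨m, hm⟩

end Real

open Real

section Integrals

variable {α : Type*} [MeasurableSpace α] {μ : Measure α} {f : α → ℝ}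

theorem integrable_mul_log_of_bound [IsFiniteMeasure μ] (hf : AEStronglyMeasurable f μ) {M : ℝ}
    (hM : ∀ᵐ a ∂μ, ‖f a‖ ≤ M) : Integrable (fun a => f a * log (f a)) μ := by
  obtain ⟨K, hK⟩ := (isCompact_closedBall (0 : ℝ) M).exists_bound_of_continuousOn
    continuous_mul_log.continuousOn
  refine .of_bound (continuous_mul_log.comp_aestronglyMeasurable hf) K ?_
  filter_upwards [hM] with a ha
  exact hK (f a) (mem_closedBall_zero_iff.mpr ha)

theorem integral_mul_log_sub_log (hf : Integrable f μ)
    (hfl : Integrable (fun a => f a * log (f a)) μ) (c : ℝ) :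
    ∫ a, f a * (log (f a) - log c) ∂μ = ∫ a, f a * log (f a) ∂μ - (∫ a, f a ∂μ) * log c := by
  simp_rw [mul_sub]
  rw [integral_sub hfl (hf.mul_const _), integral_mul_const]

theorem integral_mul_log_div_sub [IsProbabilityMeasure μ] (hf : Integrable f μ)
    (hfl : Integrable (fun a => f a * log (f a)) μ) {x : ℝ} (hx : x ≠ 0) :
    ∫ a, (f a * log (f a / x) - (f a - x)) ∂μ =
      (∫ a, f a * log (f a) ∂μ - ∫ a, f a ∂μ) + (x - (∫ a, f a ∂μ) * log x) := by
  have hfl_sub : Integrable (fun a => f a * (log (f a) - log x)) μ := by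
    simp_rw [mul_sub]; exact hfl.sub (hf.mul_const _)
  have hf_sub : Integrable (fun a => f a - x) μ := hf.sub (integrable_const x)
  simp_rw [mul_log_div _ hx]
  rw [integral_sub hfl_sub hf_sub, integral_mul_log_sub_log hf hfl,
    integral_sub hf (integrable_const x), integral_const, probReal_univ, one_smul]
  ring

end Integrals

theorem holley_stroock_variational_identity {α : Type*} [MeasurableSpace α]
    (P : Measure α) [IsProbabilityMeasure P]
    (f : α → ℝ) (hf_meas : Measurable f) (hf_nonneg : ∀ a, 0 ≤ f a)
    (hf_bdd : ∃ M : ℝ, ∀ a, f a ≤ M) :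
    ∫ a, f a * (Real.log (f a) - Real.log (∫ b, f b ∂P)) ∂P =
      ⨅ x : Set.Ioi (0 : ℝ),
        ∫ a, (f a * Real.log (f a / (x : ℝ)) - (f a - (x : ℝ))) ∂P := by
  obtain ⟨M, hM⟩ := hf_bdd
  have hf_norm : ∀ᵐ a ∂P, ‖f a‖ ≤ M :=
    ae_of_all _ fun a => by rw [norm_of_nonneg (hf_nonneg a)]; exact hM a
  have hf_int : Integrable f P := .of_bound hf_meas.aestronglyMeasurable M hf_norm
  have hfl_int := integrable_mul_log_of_bound hf_meas.aestronglyMeasurable hf_norm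
  have hm : 0 ≤ ∫ a, f a ∂P := integral_nonneg hf_nonneg
  have h_integrand (x : Ioi (0 : ℝ)) := integral_mul_log_div_sub hf_int hfl_int x.2.ne'
  have h_shift := (OrderIso.addLeft (∫ a, f a * log (f a) ∂P - ∫ a, f a ∂P)).map_ciInf
    (bddBelow_range_sub_mul_log hm)
  simp only [OrderIso.addLeft_apply] at h_shift
  simp_rw [h_integrand]
  rw [← h_shift, iInf_Ioi_sub_mul_log hm, integral_mul_log_sub_log hf_int hfl_int]
  ring
end
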